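/- Let C be a d-clutter on a finite vertex set V with C not complete, Δ = ⟨C⟩, and let v be a shedding vertex of Γ = ⟨C^∨⟩. Set D = Facets(link_Δ(v)). If the (d−1)-clutter D is chordal, then there is a sequence e_1, …, e_t with e_i ∈ SMS(C_{i−1}), where C_0 = C and C_i = C_{i−1} − e_i, such that the circuits of C_t are exactly the circuits of C not containing v. -/

import Mathlib

namespace ClutterPaper

variable {α : Type*} [DecidableEq α]

/-- `C` is a uniform clutter on vertex set `V` all of whose circuits have cardinality `c`
(i.e. a `(c-1)`-dimensional uniform clutter). -/
def IsClutter (V : Finset α) (c : ℕ) (C : Finset (Finset α)) : Prop :=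
  ∀ F ∈ C, F ⊆ V ∧ F.card = c

/-- The complement clutter `C̄`: all `c`-subsets of `V` not in `C`. -/
def compClutter (V : Finset α) (c : ℕ) (C : Finset (Finset α)) : Finset (Finset α) :=
  V.powersetCard c \ C

/-- `C^∨ = { V \ F | F ∈ C̄ }`. -/
def clutterDual (V : Finset α) (c : ℕ) (C : Finset (Finset α)) : Finset (Finset α) :=
  (compClutter V c C).image fun F => V \ F

/-- `A` is a clique of the clutter `C` (with circuit cardinality `c`) on vertex set `V`:
all `c`-subsets of `A` are circuits. -/
def IsClique (V : Finset α) (c : ℕ) (C : Finset (Finset α)) (A : Finset α) : Prop :=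
  A ⊆ V ∧ ∀ F ⊆ A, F.card = c → F ∈ C

/-- The closed neighborhood `N_C[e] = e ∪ { v ∈ V | e ∪ {v} ∈ C }`. -/
def closedNbhd (V : Finset α) (C : Finset (Finset α)) (e : Finset α) : Finset α :=
  e ∪ V.filter fun v => insert v e ∈ C

/-- `e` is a maximal subcircuit of the clutter `C` with circuit cardinality `c`:
`e` has cardinality `c - 1` and is contained in some circuit. -/
def IsMS (c : ℕ) (C : Finset (Finset α)) (e : Finset α) : Prop :=
  e.card + 1 = c ∧ ∃ F ∈ C, e ⊆ F

/-- `e` is a simplicial maximal subcircuit: a maximal subcircuit whose closed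
neighborhood is a clique. -/
def IsSMS (V : Finset α) (c : ℕ) (C : Finset (Finset α)) (e : Finset α) : Prop :=
  IsMS c C e ∧ IsClique V c C (closedNbhd V C e)

/-- `e` is a free maximal subcircuit: contained in exactly one circuit. -/
def IsFreeMS (c : ℕ) (C : Finset (Finset α)) (e : Finset α) : Prop :=
  e.card + 1 = c ∧ ∃! F, F ∈ C ∧ e ⊆ F

/-- Deletion `C − e` of a maximal subcircuit: the circuits not containing `e`. -/
def delMS (C : Finset (Finset α)) (e : Finset α) : Finset (Finset α) :=
  C.filter fun F => ¬ e ⊆ F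

/-- Deletion of a vertex: circuits (or faces) not containing `v`. -/
def delVert (C : Finset (Finset α)) (v : α) : Finset (Finset α) :=
  C.filter fun F => v ∉ F

/-- Chordality of a uniform clutter (circuit cardinality `c`) on `V`: there is a sequence of
deletions of simplicial maximal subcircuits ending in the clutter with no circuits. -/
inductive Chordal (V : Finset α) (c : ℕ) : Finset (Finset α) → Prop
  | empty : Chordal V c ∅
  | step {C : Finset (Finset α)} (e : Finset α) :
      IsSMS V c C e → Chordal V c (delMS C e) → Chordal V c C

/-- The ascent `C⁺` of a clutter with circuit cardinality `c`: all `(c+1)`-subsets of `V`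
that are cliques of `C`. -/
def ascent (V : Finset α) (c : ℕ) (C : Finset (Finset α)) : Finset (Finset α) :=
  (V.powersetCard (c + 1)).filter fun A => A.powersetCard c ⊆ C

/-- The simplicial complex `⟨D⟩` generated by a clutter `D`: all subsets of its elements. -/
def complexOf (D : Finset (Finset α)) : Finset (Finset α) :=
  D.biUnion Finset.powerset

/-- A family of finsets is a simplicial complex if it is downward closed. -/
def IsComplex (Δ : Finset (Finset α)) : Prop :=
  ∀ F ∈ Δ, ∀ G ⊆ F, G ∈ Δ

/-- The facets (maximal faces) of a simplicial complex. -/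
def facets (Δ : Finset (Finset α)) : Finset (Finset α) :=
  Δ.filter fun F => ∀ G ∈ Δ, F ⊆ G → F = G

/-- `link_Δ(v) = { F \ {v} | v ∈ F ∈ Δ }`. -/
def link (Δ : Finset (Finset α)) (v : α) : Finset (Finset α) :=
  (Δ.filter fun F => v ∈ F).image fun F => F.erase v

/-- `v` is a shedding vertex of `Δ`: no face of `link_Δ(v)` is a facet of `Δ − v`. -/
def Shedding (Δ : Finset (Finset α)) (v : α) : Prop :=
  ∀ F ∈ link Δ v, F ∉ facets (delVert Δ v)

/-- Alexander dual of a simplicial complex on vertex set `V`: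
`Δ^∨ = { V \ F | F ⊆ V, F ∉ Δ }`. -/
def alexDual (V : Finset α) (Δ : Finset (Finset α)) : Finset (Finset α) :=
  (V.powerset.filter fun F => F ∉ Δ).image fun F => V \ F

/-- `Δ` is pure with all facets of cardinality `c` (dimension `c - 1`), and nonempty. -/
def PureDim (Δ : Finset (Finset α)) (c : ℕ) : Prop :=
  Δ.Nonempty ∧ ∀ F ∈ facets Δ, F.card = c

/-- Vertex decomposability of a simplicial complex. -/
inductive VDecomp : Finset (Finset α) → Prop
  | simplex {Δ : Finset (Finset α)} : (facets Δ).card = 1 → VDecomp Δ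
  | shed {Δ : Finset (Finset α)} (v : α) : Shedding Δ v →
      VDecomp (link Δ v) → VDecomp (delVert Δ v) → VDecomp Δ

/-- The vertex set of a clutter (or of the complex it generates). -/
def vertexSet (Ω : Finset (Finset α)) : Finset α :=
  Ω.biUnion id

/-- `Ω` (given by its set of facets, each of cardinality `d+1`) is a `d`-cycle:
nonempty, pure of dimension `d`, `d`-path connected, and every `(d-1)`-dimensional
face lies in an even number of `d`-faces. -/
def IsCycle (d : ℕ) (Ω : Finset (Finset α)) : Prop :=
  Ω.Nonempty ∧ (∀ F ∈ Ω, F.card = d + 1) ∧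
    (∀ F ∈ Ω, ∀ G ∈ Ω,
      Relation.ReflTransGen (fun A B => A ∈ Ω ∧ B ∈ Ω ∧ (A ∩ B).card = d) F G) ∧
    ∀ e : Finset α, e.card = d → Even ((Ω.filter fun F => e ⊆ F).card)

/-- A face-minimal `d`-cycle: no `d`-cycle has a strictly smaller set of `d`-faces. -/
def FaceMinimalCycle (d : ℕ) (Ω : Finset (Finset α)) : Prop :=
  IsCycle d Ω ∧ ∀ Ω' : Finset (Finset α), IsCycle d Ω' → Ω' ⊆ Ω → Ω' = Ω

/-- `Ω` is `d`-complete: it contains every `(d+1)`-subset of its vertex set. -/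
def DComplete (d : ℕ) (Ω : Finset (Finset α)) : Prop :=
  ∀ F ⊆ vertexSet Ω, F.card = d + 1 → F ∈ Ω

/-- The complex `⟨C⟩` generated by the `d`-dimensional clutter `C` is `d`-chorded. -/
def Chorded (d : ℕ) (C : Finset (Finset α)) : Prop :=
  ∀ Ω : Finset (Finset α), FaceMinimalCycle d Ω → Ω ⊆ C → ¬ DComplete d Ω →
    ∃ (k : ℕ) (Ωs : Fin k → Finset (Finset α)), 2 ≤ k ∧
      (∀ i, IsCycle d (Ωs i) ∧ Ωs i ⊆ C) ∧
      (∀ F ∈ Ω, ∃ i, F ∈ Ωs i) ∧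
      (∀ F ∈ Ω, Odd ((Finset.univ.filter fun i => F ∈ Ωs i).card)) ∧
      (∀ F : Finset α, (∃ i, F ∈ Ωs i) → F ∉ Ω →
        Even ((Finset.univ.filter fun i => F ∈ Ωs i).card)) ∧
      ∀ i, vertexSet (Ωs i) ⊂ vertexSet Ω

/-- The circuits of `D` admit an admissible order. -/
def HasAdmissibleOrder (D : Finset (Finset α)) : Prop :=
  ∃ (t : ℕ) (F : Fin t → Finset α), Function.Injective F ∧
    (∀ G, G ∈ D ↔ ∃ i, F i = G) ∧
    ∀ i j : Fin t, j < i →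
      ∃ l ∈ F j \ F i, ∃ k : Fin t, k < i ∧ F k \ F i = {l}

/-- Contraction `D/v` of a (not necessarily uniform) clutter: the minimal sets of
`{ e \ {v} | e ∈ D }`. -/
def contractAux (D : Finset (Finset α)) (v : α) : Finset (Finset α) :=
  D.image fun e => e.erase v

def contract (D : Finset (Finset α)) (v : α) : Finset (Finset α) :=
  (contractAux D v).filter fun e => ∀ f ∈ contractAux D v, f ⊆ e → f = e

/-- `D` has a simplicial vertex (trivially true if `D` has no vertices). -/
def HasSimpVertex (D : Finset (Finset α)) : Prop :=
  vertexSet D = ∅ ∨ ∃ v ∈ vertexSet D, ∀ e₁ ∈ D, ∀ e₂ ∈ D, v ∈ e₁ → v ∈ e₂ →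
    ∃ e₃ ∈ D, e₃ ⊆ (e₁ ∪ e₂).erase v

/-- `D` is W-chordal: every clutter obtained from `D` by a sequence of vertex deletions
and contractions has a simplicial vertex. -/
def WChordal (D : Finset (Finset α)) : Prop :=
  ∀ D' : Finset (Finset α),
    Relation.ReflTransGen (fun X Y => ∃ v, Y = delVert X v ∨ Y = contract X v) D D' →
    HasSimpVertex D'

/-! The circuits of `C` through `v` are the cones `v * f` over the link `D` of `v`. Deleting a
simplicial maximal subcircuit `e` of `D` lifts to deleting `v * e` from `C`: the closed
neighbourhood of `v * e` is the cone over that of `e`, and it is still a clique because shedding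
of `v` in `⟨C^∨⟩` forces every `(d+1)`-set avoiding `v` whose cone boundary lies in `C` to be a
circuit. Running `D` down to the empty clutter removes exactly the circuits through `v`. -/

lemma mem_complexOf {D : Finset (Finset α)} {X : Finset α} :
    X ∈ complexOf D ↔ ∃ H ∈ D, X ⊆ H := by
  simp [complexOf]

lemma isComplex_complexOf (D : Finset (Finset α)) : IsComplex (complexOf D) := by
  intro F hF G hGF
  obtain ⟨H, hH, hFH⟩ := mem_complexOf.1 hF
  exact mem_complexOf.2 ⟨H, hH, hGF.trans hFH⟩

lemma facets_complexOf {D : Finset (Finset α)} (hD : IsAntichain (· ⊆ ·) (D : Set (Finset α))) :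
    facets (complexOf D) = D := by
  ext X
  simp only [facets, Finset.mem_filter, mem_complexOf]
  constructor
  · rintro ⟨⟨H, hH, hXH⟩, hmax⟩
    rwa [hmax H ⟨H, hH, subset_rfl⟩ hXH]
  · refine fun hX => ⟨⟨X, hX, subset_rfl⟩, fun G ⟨H, hH, hGH⟩ hXG => ?_⟩
    have hXH : X = H := hD.eq hX hH (hXG.trans hGH)
    exact hXG.antisymm (hXH ▸ hGH)

lemma mem_link {Δ : Finset (Finset α)} {v : α} {f : Finset α} :
    f ∈ link Δ v ↔ v ∉ f ∧ insert v f ∈ Δ := by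
  simp only [link, Finset.mem_image, Finset.mem_filter]
  constructor
  · rintro ⟨F, ⟨hF, hvF⟩, rfl⟩
    exact ⟨Finset.notMem_erase v F, by rwa [Finset.insert_erase hvF]⟩
  · rintro ⟨hvf, hf⟩
    exact ⟨insert v f, ⟨hf, Finset.mem_insert_self v f⟩, Finset.erase_insert hvf⟩

lemma link_complexOf (C : Finset (Finset α)) (v : α) :
    link (complexOf C) v = complexOf (link C v) := by
  ext X
  simp only [mem_link, mem_complexOf]
  constructor
  · rintro ⟨hvX, H, hH, hXH⟩
    have hvH : v ∈ H := hXH (Finset.mem_insert_self v X)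
    refine ⟨H.erase v, ⟨Finset.notMem_erase v H, by rwa [Finset.insert_erase hvH]⟩, ?_⟩
    exact Finset.subset_erase.2 ⟨(Finset.subset_insert v X).trans hXH, hvX⟩
  · rintro ⟨f, ⟨hvf, hf⟩, hXf⟩
    exact ⟨fun hvX => hvf (hXf hvX), insert v f, hf, Finset.insert_subset_insert v hXf⟩

lemma facets_link_complexOf {V : Finset α} {d : ℕ} {C : Finset (Finset α)}
    (hC : IsClutter V (d + 1) C) (v : α) :
    facets (link (complexOf C) v) = link C v := by
  rw [link_complexOf, facets_complexOf]
  refine Set.Sized.isAntichain (r := d) fun f hf => ?_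
  obtain ⟨hvf, hf⟩ := mem_link.1 hf
  simpa [Finset.card_insert_of_notMem hvf] using (hC _ hf).2

lemma Shedding.exists_insert_mem {Δ : Finset (Finset α)} {v : α} (hΔ : IsComplex Δ)
    (hv : Shedding Δ v) {G : Finset α} (hG : G ∈ link Δ v) :
    ∃ w ∉ G, w ≠ v ∧ insert w G ∈ Δ := by
  obtain ⟨hvG, hvGΔ⟩ := mem_link.1 hG
  have hGdel : G ∈ delVert Δ v :=
    Finset.mem_filter.2 ⟨hΔ _ hvGΔ G (Finset.subset_insert v G), hvG⟩
  have hnotFacet := hv G hG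
  simp only [facets, Finset.mem_filter, hGdel, true_and, not_forall] at hnotFacet
  obtain ⟨H, hH, hGH, hne⟩ := hnotFacet
  obtain ⟨hHΔ, hvH⟩ := Finset.mem_filter.1 hH
  obtain ⟨w, hwH, hwG⟩ := Finset.exists_of_ssubset (hGH.ssubset_of_ne hne)
  exact ⟨w, hwG, fun hwv => hvH (hwv ▸ hwH), hΔ H hHΔ _ (Finset.insert_subset hwH hGH)⟩

/-- If `F ∉ C`, then `V \ F` is a facet of `⟨C^∨⟩` through `v`; shedding lets some `w ∈ F` be
added to `(V \ F) \ {v}` inside `⟨C^∨⟩`, and the non-circuit witnessing this is `v * (F \ {w})`. -/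
lemma mem_of_shedding_dual {V : Finset α} {c : ℕ} {C : Finset (Finset α)} {v : α}
    (hv : v ∈ V) (hshed : Shedding (complexOf (clutterDual V c C)) v)
    {F : Finset α} (hFV : F ⊆ V.erase v) (hF : F.card = c)
    (hcone : ∀ w ∈ F, insert v (F.erase w) ∈ C) : F ∈ C := by
  by_contra hFC
  have hvF : v ∉ F := fun h => (Finset.mem_erase.1 (hFV h)).1 rfl
  have hlink : (V.erase v) \ F ∈ link (complexOf (clutterDual V c C)) v := by
    refine mem_link.2 ⟨by simp, mem_complexOf.2 ⟨V \ F, ?_, ?_⟩⟩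
    · exact Finset.mem_image_of_mem _ (by
        simp [compClutter, hFC, hF, hFV.trans (Finset.erase_subset v V)])
    · intro x; simp only [Finset.mem_insert, Finset.mem_sdiff, Finset.mem_erase]; grind
  obtain ⟨w, hwG, hwv, hw⟩ :=
    hshed.exists_insert_mem (isComplex_complexOf _) hlink
  obtain ⟨X, hX, hwX⟩ := mem_complexOf.1 hw
  obtain ⟨F', hF', rfl⟩ := Finset.mem_image.1 hX
  simp only [compClutter, Finset.mem_sdiff, Finset.mem_powersetCard] at hF'
  obtain ⟨⟨hF'V, hF'card⟩, hF'C⟩ := hF'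
  have hwF : w ∈ F := by
    have := hwX (Finset.mem_insert_self w _)
    simp only [Finset.mem_sdiff, Finset.mem_erase] at this hwG
    tauto
  have hF'eq : F' = insert v (F.erase w) := by
    refine Finset.eq_of_subset_of_card_le (fun x hx => ?_) ?_
    · have := @hwX x
      simp only [Finset.mem_insert, Finset.mem_sdiff, Finset.mem_erase] at this ⊢
      have := hF'V hx
      grind
    · rw [Finset.card_insert_of_notMem (fun h => hvF (Finset.mem_of_mem_erase h)),
        Finset.card_erase_of_mem hwF, hF, hF'card]
      have := Finset.card_pos.2 ⟨w, hwF⟩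
      omega
  exact hF'C (hF'eq ▸ hcone w hwF)

def replaceLink (C : Finset (Finset α)) (v : α) (D : Finset (Finset α)) : Finset (Finset α) :=
  delVert C v ∪ D.image (insert v)

lemma replaceLink_link (C : Finset (Finset α)) (v : α) : replaceLink C v (link C v) = C := by
  ext F
  simp only [replaceLink, delVert, Finset.mem_union, Finset.mem_filter, Finset.mem_image,
    mem_link]
  constructor
  · rintro (⟨hF, -⟩ | ⟨f, ⟨-, hf⟩, rfl⟩) <;> assumption
  · intro hF
    by_cases hvF : v ∈ F
    · exact Or.inr ⟨F.erase v, ⟨Finset.notMem_erase v F, by rwa [Finset.insert_erase hvF]⟩,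
        Finset.insert_erase hvF⟩
    · exact Or.inl ⟨hF, hvF⟩

@[simp]
lemma replaceLink_empty (C : Finset (Finset α)) (v : α) : replaceLink C v ∅ = delVert C v := by
  simp [replaceLink]

lemma insert_mem_replaceLink_iff {C D : Finset (Finset α)} {v : α} (hD : ∀ f ∈ D, v ∉ f)
    {s : Finset α} (hvs : v ∉ s) : insert v s ∈ replaceLink C v D ↔ s ∈ D := by
  simp only [replaceLink, delVert, Finset.mem_union, Finset.mem_filter, Finset.mem_image,
    Finset.mem_insert_self, not_true_eq_false, and_false, false_or]
  constructor
  · rintro ⟨f, hf, hfs⟩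
    rwa [← Finset.erase_insert hvs, ← hfs, Finset.erase_insert (hD f hf)]
  · exact fun hs => ⟨s, hs, rfl⟩

lemma delMS_replaceLink (C D : Finset (Finset α)) {v : α} {e : Finset α} (hve : v ∉ e) :
    delMS (replaceLink C v D) (insert v e) = replaceLink C v (delMS D e) := by
  ext F
  simp only [replaceLink, delMS, delVert, Finset.mem_filter, Finset.mem_union, Finset.mem_image]
  constructor
  · rintro ⟨⟨hF, hvF⟩ | ⟨f, hf, rfl⟩, hns⟩
    · exact Or.inl ⟨hF, hvF⟩
    · exact Or.inr ⟨f, ⟨hf, fun hef => hns (Finset.insert_subset_insert v hef)⟩, rfl⟩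
  · rintro (⟨hF, hvF⟩ | ⟨f, ⟨hf, hef⟩, rfl⟩)
    · exact ⟨Or.inl ⟨hF, hvF⟩, fun hs => hvF (hs (Finset.mem_insert_self v e))⟩
    · refine ⟨Or.inr ⟨f, hf, rfl⟩, fun hs => hef ?_⟩
      rwa [Finset.insert_subset_insert_iff hve] at hs

lemma closedNbhd_replaceLink (V : Finset α) (C : Finset (Finset α)) {D : Finset (Finset α)}
    {v : α} (hD : ∀ f ∈ D, v ∉ f) {e : Finset α} (hve : v ∉ e) :
    closedNbhd V (replaceLink C v D) (insert v e)
      = insert v (closedNbhd (V.erase v) D e) := by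
  ext x
  rcases eq_or_ne x v with rfl | hxv
  · simp [closedNbhd]
  · have hvxe : v ∉ insert x e := by simp [hxv.symm, hve]
    simp only [closedNbhd, Finset.mem_union, Finset.mem_insert, Finset.mem_filter,
      Finset.mem_erase, hxv, false_or, ne_eq, not_false_eq_true, true_and]
    rw [Finset.insert_comm, insert_mem_replaceLink_iff hD hvxe]

lemma IsMS.notMem_of_subset_link {c : ℕ} {C D : Finset (Finset α)} {v : α} {e : Finset α}
    (he : IsMS c D e) (hD : D ⊆ link C v) : v ∉ e := by
  obtain ⟨-, f, hf, hef⟩ := he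
  exact fun hve => (mem_link.1 (hD hf)).1 (hef hve)

lemma IsSMS.insert_replaceLink {V : Finset α} {d : ℕ} {C D : Finset (Finset α)} {v : α}
    (hv : v ∈ V) (hshed : Shedding (complexOf (clutterDual V (d + 1) C)) v)
    (hD : D ⊆ link C v) {e : Finset α} (he : IsSMS (V.erase v) d D e) :
    IsSMS V (d + 1) (replaceLink C v D) (insert v e) := by
  have hDv : ∀ f ∈ D, v ∉ f := fun f hf => (mem_link.1 (hD hf)).1
  have hve : v ∉ e := he.1.notMem_of_subset_link hD
  obtain ⟨⟨hecard, f₀, hf₀, hef₀⟩, hNV, hNclique⟩ := he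
  refine ⟨⟨by rw [Finset.card_insert_of_notMem hve, hecard], insert v f₀,
    Finset.mem_union_right _ (Finset.mem_image_of_mem _ hf₀),
    Finset.insert_subset_insert v hef₀⟩, ?_⟩
  rw [closedNbhd_replaceLink V C hDv hve]
  refine ⟨Finset.insert_subset hv (hNV.trans (Finset.erase_subset v V)), fun F hF hFcard => ?_⟩
  by_cases hvF : v ∈ F
  · rw [← Finset.insert_erase hvF, insert_mem_replaceLink_iff hDv (Finset.notMem_erase v F)]
    exact hNclique _ (Finset.subset_insert_iff.1 hF)
      (by rw [Finset.card_erase_of_mem hvF, hFcard]; rfl)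
  · have hFN := (Finset.subset_insert_iff_of_notMem hvF).1 hF
    refine Finset.mem_union_left _ (Finset.mem_filter.2 ⟨?_, hvF⟩)
    refine mem_of_shedding_dual hv hshed (hFN.trans hNV) hFcard fun w hw => ?_
    refine (mem_link.1 (hD (hNclique _ ((Finset.erase_subset w F).trans hFN) ?_))).2
    rw [Finset.card_erase_of_mem hw, hFcard]; rfl

def SMSReduces (V : Finset α) (c : ℕ) (C C' : Finset (Finset α)) : Prop :=
  ∃ (t : ℕ) (es : Fin t → Finset α) (Cs : Fin (t + 1) → Finset (Finset α)),
    Cs 0 = C ∧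
    (∀ i : Fin t, IsSMS V c (Cs i.castSucc) (es i) ∧ Cs i.succ = delMS (Cs i.castSucc) (es i)) ∧
    Cs (Fin.last t) = C'

lemma SMSReduces.refl (V : Finset α) (c : ℕ) (C : Finset (Finset α)) : SMSReduces V c C C :=
  ⟨0, Fin.elim0, fun _ => C, rfl, fun i => i.elim0, rfl⟩

lemma SMSReduces.cons {V : Finset α} {c : ℕ} {C C' : Finset (Finset α)} {e : Finset α}
    (he : IsSMS V c C e) (h : SMSReduces V c (delMS C e) C') : SMSReduces V c C C' := by
  obtain ⟨t, es, Cs, h0, hstep, hlast⟩ := h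
  refine ⟨t + 1, Fin.cons e es, Fin.cons C Cs, rfl, Fin.cases ?_ fun i => ?_, hlast⟩
  · simpa [h0] using he
  · simpa [← Fin.succ_castSucc] using hstep i

lemma Chordal.smsReduces_replaceLink {V : Finset α} {d : ℕ} {C D : Finset (Finset α)} {v : α}
    (hD : Chordal (V.erase v) d D) (hDlink : D ⊆ link C v) (hv : v ∈ V)
    (hshed : Shedding (complexOf (clutterDual V (d + 1) C)) v) :
    SMSReduces V (d + 1) (replaceLink C v D) (delVert C v) := by
  induction hD with
  | empty => simpa using SMSReduces.refl V (d + 1) (delVert C v)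
  | step e he _ ih =>
    refine SMSReduces.cons (he.insert_replaceLink hv hshed hDlink) ?_
    rw [delMS_replaceLink C _ (he.1.notMem_of_subset_link hDlink)]
    exact ih ((Finset.filter_subset _ _).trans hDlink)

theorem ver_del_general (V : Finset α) (d : ℕ) (C : Finset (Finset α))
    (hC : IsClutter V (d + 1) C)
    (v : α) (hv : v ∈ V)
    (hshed : Shedding (complexOf (clutterDual V (d + 1) C)) v)
    (hD : Chordal (V.erase v) d (facets (link (complexOf C) v))) :
    ∃ (t : ℕ) (es : Fin t → Finset α) (Cs : Fin (t + 1) → Finset (Finset α)),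
      Cs 0 = C ∧
      (∀ i : Fin t, IsSMS V (d + 1) (Cs i.castSucc) (es i) ∧
        Cs i.succ = delMS (Cs i.castSucc) (es i)) ∧
      Cs (Fin.last t) = delVert C v := by
  rw [facets_link_complexOf hC] at hD
  have h := hD.smsReduces_replaceLink subset_rfl hv hshed
  rwa [replaceLink_link] at h

/-- With `C` a non-complete `d`-clutter on `V`, `v` a shedding vertex of
`Γ = ⟨C^∨⟩`, and `D = Facets(link_{⟨C⟩}(v))` chordal, there is a sequence `e_1, …, e_t` with
`e_i ∈ SMS(C_{i−1})`, `C_0 = C`, `C_i = C_{i−1} − e_i`, such that the circuits of `C_t` are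
exactly the circuits of `C` not containing `v`. -/
theorem ver_del (V : Finset α) (d : ℕ) (C : Finset (Finset α))
    (hC : IsClutter V (d + 1) C) (hnc : C ≠ V.powersetCard (d + 1))
    (v : α) (hv : v ∈ V)
    (hshed : Shedding (complexOf (clutterDual V (d + 1) C)) v)
    (hD : Chordal (V.erase v) d (facets (link (complexOf C) v))) :
    ∃ (t : ℕ) (es : Fin t → Finset α) (Cs : Fin (t + 1) → Finset (Finset α)),
      Cs 0 = C ∧
      (∀ i : Fin t, IsSMS V (d + 1) (Cs i.castSucc) (es i) ∧
        Cs i.succ = delMS (Cs i.castSucc) (es i)) ∧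
      Cs (Fin.last t) = delVert C v :=
  ver_del_general V d C hC v hv hshed hD

end ClutterPaper
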